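/- Suppose for each i in a finite set, π_{ij} ∈ [0,1] for j = 1,...,m with Σ_j π_{ij} = k_i (an integer with 1 ≤ k_i ≤ m). Then there exists a probability distribution P over subsets A ⊆ {1,...,m} with |A| = k_i such that Σ_{A ∋ j} P(A) = π_{ij} for every j. -/
import Mathlib

open Finset

private lemma dist_exists (m k : ℕ) :
    ∀ (n : ℕ) (p : Fin m → ℝ),
      (univ.filter fun j => p j ≠ 0 ∧ p j ≠ 1).card = n →
      (∀ j, 0 ≤ p j) → (∀ j, p j ≤ 1) → (∑ j, p j = (k : ℝ)) →
      ∃ P : Finset (Fin m) → ℝ,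
        (∀ A, 0 ≤ P A) ∧
        (∀ A, P A ≠ 0 → A.card = k) ∧
        (∑ A : Finset (Fin m), P A = 1) ∧
        (∀ j, ∑ A ∈ Finset.univ.filter (fun A : Finset (Fin m) => j ∈ A), P A = p j) := by
  intro n
  induction n using Nat.strong_induction_on with
  | _ n ih =>
  intro p hcard h0 h1 hsum
  rcases Finset.eq_empty_or_nonempty (univ.filter fun j => p j ≠ 0 ∧ p j ≠ 1) with hemp | hne
  · -- base case: all p j ∈ {0,1}
    have hall : ∀ j, p j = 0 ∨ p j = 1 := by
      intro j
      by_contra h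
      push_neg at h
      have : j ∈ (univ.filter fun j => p j ≠ 0 ∧ p j ≠ 1) := by
        simp [h.1, h.2]
      simp [hemp] at this
    set A : Finset (Fin m) := univ.filter (fun j => p j = 1) with hA
    have hsumA : ∑ j, p j = (A.card : ℝ) := by
      rw [← Finset.sum_filter_add_sum_filter_not univ (fun j => p j = 1)]
      have h2 : ∑ j ∈ univ.filter (fun j => ¬ p j = 1), p j = 0 := by
        apply Finset.sum_eq_zero
        intro j hj
        simp only [Finset.mem_filter] at hj
        rcases hall j with h | h
        · exact h
        · exact absurd h hj.2
      have h1' : ∑ j ∈ A, p j = (A.card : ℝ) := by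
        rw [Finset.card_eq_sum_ones, Nat.cast_sum]
        apply Finset.sum_congr rfl
        intro j hj
        simp only [hA, Finset.mem_filter] at hj
        simp [hj.2]
      rw [h2, ← hA, h1', add_zero]
    have hcardA : A.card = k := by
      have : (A.card : ℝ) = (k : ℝ) := by rw [← hsumA, hsum]
      exact_mod_cast this
    refine ⟨fun B => if B = A then 1 else 0, ?_, ?_, ?_, ?_⟩
    · intro B; by_cases h : B = A <;> simp [h]
    · intro B hB
      have : B = A := by by_contra h; simp [h] at hB
      rw [this, hcardA]
    · simp
    · intro j
      have hstep : ∑ B ∈ univ.filter (fun B : Finset (Fin m) => j ∈ B),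
          (if B = A then (1:ℝ) else 0)
          = if A ∈ univ.filter (fun B : Finset (Fin m) => j ∈ B) then 1 else 0 :=
        Finset.sum_ite_eq' _ A _
      simp only [Finset.mem_filter, Finset.mem_univ, true_and] at hstep
      rw [hstep]
      by_cases hj : j ∈ A
      · have : p j = 1 := by simpa [hA] using (Finset.mem_filter.mp hj).2
        simp [hj, this]
      · have : p j = 0 := by
          rcases hall j with h | h
          · exact h
          · exact absurd (show j ∈ A by simp [hA, h]) hj
        simp [hj, this]
  · -- inductive step
    obtain ⟨j1, hj1F⟩ := hne
    have hj1 := (Finset.mem_filter.mp hj1F).2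
    have hp1pos : 0 < p j1 := lt_of_le_of_ne (h0 j1) (Ne.symm hj1.1)
    have hp1lt : p j1 < 1 := lt_of_le_of_ne (h1 j1) hj1.2
    have h2card : 2 ≤ (univ.filter fun j => p j ≠ 0 ∧ p j ≠ 1).card := by
      by_contra hc
      push_neg at hc
      have hone : ∀ j, j ≠ j1 → (p j = 0 ∨ p j = 1) := by
        intro j hj
        by_contra h
        push_neg at h
        have hjF : j ∈ (univ.filter fun j => p j ≠ 0 ∧ p j ≠ 1) := by
          simp [h.1, h.2]
        exact hj (Finset.card_le_one.mp (by omega) j hjF j1 hj1F)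
      set N := ((univ.erase j1).filter (fun j => p j = 1)).card with hN
      have hrest : ∑ j ∈ univ.erase j1, p j = (N : ℝ) := by
        rw [← Finset.sum_filter_add_sum_filter_not (univ.erase j1) (fun j => p j = 1)]
        have hz : ∑ j ∈ (univ.erase j1).filter (fun j => ¬ p j = 1), p j = 0 := by
          apply Finset.sum_eq_zero
          intro j hj
          simp only [Finset.mem_filter, Finset.mem_erase] at hj
          rcases hone j hj.1.1 with h | h
          · exact h
          · exact absurd h hj.2
        have ho : ∑ j ∈ (univ.erase j1).filter (fun j => p j = 1), p j = (N:ℝ) := by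
          rw [hN, Finset.card_eq_sum_ones, Nat.cast_sum]
          apply Finset.sum_congr rfl
          intro j hj
          simp [(Finset.mem_filter.mp hj).2]
        rw [hz, ho, add_zero]
      have hsplit : p j1 + (N:ℝ) = (k:ℝ) := by
        have h := Finset.add_sum_erase univ p (Finset.mem_univ j1)
        rw [hrest, hsum] at h
        exact h
      have hNk : N < k := by
        have : (N:ℝ) < (k:ℝ) := by linarith
        exact_mod_cast this
      have hkN : k < N + 1 := by
        have : (k:ℝ) < (N:ℝ) + 1 := by linarith
        exact_mod_cast this
      omega
    have herase : 0 < ((univ.filter fun j => p j ≠ 0 ∧ p j ≠ 1).erase j1).card := by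
      rw [Finset.card_erase_of_mem hj1F]
      omega
    obtain ⟨j2, hj2e⟩ := Finset.card_pos.mp herase
    have hj2ne : j2 ≠ j1 := (Finset.mem_erase.mp hj2e).1
    have hj2F : j2 ∈ (univ.filter fun j => p j ≠ 0 ∧ p j ≠ 1) := (Finset.mem_erase.mp hj2e).2
    have hj2 := (Finset.mem_filter.mp hj2F).2
    have hp2pos : 0 < p j2 := lt_of_le_of_ne (h0 j2) (Ne.symm hj2.1)
    have hp2lt : p j2 < 1 := lt_of_le_of_ne (h1 j2) hj2.2
    set t : ℝ := min (p j1) (1 - p j2) with ht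
    set s : ℝ := min (1 - p j1) (p j2) with hs
    have htpos : 0 < t := lt_min hp1pos (by linarith)
    have hspos : 0 < s := lt_min (by linarith) hp2pos
    have ht1 : t ≤ p j1 := min_le_left _ _
    have ht2 : t ≤ 1 - p j2 := min_le_right _ _
    have hs1 : s ≤ 1 - p j1 := min_le_left _ _
    have hs2 : s ≤ p j2 := min_le_right _ _
    set q : ℝ → Fin m → ℝ :=
      fun c j => p j + ((if j = j2 then c else 0) - (if j = j1 then c else 0)) with hqdef
    have hq1 : ∀ c, q c j1 = p j1 - c := by
      intro c; simp [hqdef, hj2ne.symm]; ring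
    have hq2 : ∀ c, q c j2 = p j2 + c := by
      intro c; simp [hqdef, hj2ne]
    have hqo : ∀ c j, j ≠ j1 → j ≠ j2 → q c j = p j := by
      intro c j ha hb; simp [hqdef, ha, hb]
    have hqsum : ∀ c, ∑ j, q c j = (k:ℝ) := by
      intro c
      simp only [hqdef]
      rw [Finset.sum_add_distrib, Finset.sum_sub_distrib,
        Finset.sum_ite_eq' univ j2 (fun _ => c), Finset.sum_ite_eq' univ j1 (fun _ => c), hsum]
      simp
    have hfsub : ∀ c, (univ.filter fun j => q c j ≠ 0 ∧ q c j ≠ 1)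
        ⊆ (univ.filter fun j => p j ≠ 0 ∧ p j ≠ 1) := by
      intro c j hj
      by_cases ha : j = j1
      · subst ha; exact hj1F
      by_cases hb : j = j2
      · subst hb; exact hj2F
      · simp only [Finset.mem_filter, Finset.mem_univ, true_and] at hj ⊢
        rwa [hqo c j ha hb] at hj
    have hcard1 : (univ.filter fun j => q t j ≠ 0 ∧ q t j ≠ 1).card < n := by
      rw [← hcard]
      apply Finset.card_lt_card
      rw [Finset.ssubset_iff_of_subset (hfsub t)]
      rcases min_cases (p j1) (1 - p j2) with ⟨he, _⟩ | ⟨he, _⟩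
      · refine ⟨j1, hj1F, ?_⟩
        have hz : q t j1 = 0 := by rw [hq1, ht, he]; ring
        simp [Finset.mem_filter, hz]
      · refine ⟨j2, hj2F, ?_⟩
        have hz : q t j2 = 1 := by rw [hq2, ht, he]; ring
        simp [Finset.mem_filter, hz]
    have hcard2 : (univ.filter fun j => q (-s) j ≠ 0 ∧ q (-s) j ≠ 1).card < n := by
      rw [← hcard]
      apply Finset.card_lt_card
      rw [Finset.ssubset_iff_of_subset (hfsub (-s))]
      rcases min_cases (1 - p j1) (p j2) with ⟨he, _⟩ | ⟨he, _⟩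
      · refine ⟨j1, hj1F, ?_⟩
        have hz : q (-s) j1 = 1 := by rw [hq1, hs, he]; ring
        simp [Finset.mem_filter, hz]
      · refine ⟨j2, hj2F, ?_⟩
        have hz : q (-s) j2 = 0 := by rw [hq2, hs, he]; ring
        simp [Finset.mem_filter, hz]
    have hb1 : ∀ j, 0 ≤ q t j ∧ q t j ≤ 1 := by
      intro j
      by_cases ha : j = j1
      · subst ha; rw [hq1]; constructor <;> linarith
      by_cases hb : j = j2
      · subst hb; rw [hq2]; constructor <;> linarith
      · rw [hqo t j ha hb]; exact ⟨h0 j, h1 j⟩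
    have hb2 : ∀ j, 0 ≤ q (-s) j ∧ q (-s) j ≤ 1 := by
      intro j
      by_cases ha : j = j1
      · subst ha; rw [hq1]; constructor <;> linarith
      by_cases hb : j = j2
      · subst hb; rw [hq2]; constructor <;> linarith
      · rw [hqo (-s) j ha hb]; exact ⟨h0 j, h1 j⟩
    obtain ⟨P1, hP1n, hP1s, hP1t, hP1m⟩ :=
      ih _ hcard1 (q t) rfl (fun j => (hb1 j).1) (fun j => (hb1 j).2) (hqsum t)
    obtain ⟨P2, hP2n, hP2s, hP2t, hP2m⟩ :=
      ih _ hcard2 (q (-s)) rfl (fun j => (hb2 j).1) (fun j => (hb2 j).2) (hqsum (-s))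
    have hst : 0 < s + t := by linarith
    refine ⟨fun A => (s * P1 A + t * P2 A) / (s + t), ?_, ?_, ?_, ?_⟩
    · intro A
      exact div_nonneg (add_nonneg (mul_nonneg hspos.le (hP1n A))
        (mul_nonneg htpos.le (hP2n A))) hst.le
    · intro A hA
      by_contra hcardA
      apply hA
      have e1 : P1 A = 0 := by
        by_contra h; exact hcardA (hP1s A h)
      have e2 : P2 A = 0 := by
        by_contra h; exact hcardA (hP2s A h)
      simp [e1, e2]
    · rw [← Finset.sum_div, Finset.sum_add_distrib, ← Finset.mul_sum, ← Finset.mul_sum,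
        hP1t, hP2t]
      field_simp
    · intro j
      rw [← Finset.sum_div, Finset.sum_add_distrib, ← Finset.mul_sum, ← Finset.mul_sum,
        hP1m j, hP2m j, div_eq_iff (ne_of_gt hst)]
      by_cases ha : j = j1
      · subst ha; rw [hq1, hq1]; ring
      by_cases hb : j = j2
      · subst hb; rw [hq2, hq2]; ring
      · rw [hqo t j ha hb, hqo (-s) j ha hb]; ring

/-- Feasibility of probabilistic scheduling: marginals `π_{ij} ∈ [0,1]` with
`Σ_j π_{ij} = k_i` are realizable by a probability distribution over
`k_i`-subsets of the `m` servers. -/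
theorem probabilistic_scheduling_feasibility
    {ι : Type*} [Fintype ι] (m : ℕ) (hm : 1 ≤ m)
    (k : ι → ℕ) (hk : ∀ i, 1 ≤ k i ∧ k i ≤ m)
    (pi_ : ι → Fin m → ℝ)
    (hbound : ∀ i j, pi_ i j ∈ Set.Icc (0 : ℝ) 1)
    (hsum : ∀ i, ∑ j, pi_ i j = (k i : ℝ)) :
    ∀ i, ∃ P : Finset (Fin m) → ℝ,
      (∀ A, 0 ≤ P A) ∧
      (∀ A, P A ≠ 0 → A.card = k i) ∧
      (∑ A : Finset (Fin m), P A = 1) ∧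
      (∀ j, ∑ A ∈ Finset.univ.filter (fun A : Finset (Fin m) => j ∈ A), P A
        = pi_ i j) := by
  intro i
  exact dist_exists m (k i) _ (pi_ i) rfl (fun j => (hbound i j).1) (fun j => (hbound i j).2) (hsum i)
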